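/- arXiv:1703.00636 — 2 statements merged into one kernel-verified Lean document; each statement's English description precedes it below -/
import Mathlib

section
/- Injectivity of the multiplication map in degree 10: if p is a weighted homogeneous polynomial of weighted degree 10 such that both x₁·p ∈ J and x₂·p ∈ J, then p ∈ J. -/
open MvPolynomial

noncomputable section

/-- The polynomial ring `ℂ[x₁,x₂,x₃,x₄]`. -/
abbrev S : Type := MvPolynomial (Fin 4) ℂ

/-- The weights `(1,1,2,5)`. -/
def w : Fin 4 → ℕ := ![1, 1, 2, 5]

/-- The Fermat-type polynomial `f₀ = x₁¹⁰ + x₂¹⁰ + x₃⁵ + x₄²`. -/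
def f₀ : S := X 0 ^ 10 + X 1 ^ 10 + X 2 ^ 5 + X 3 ^ 2

/-- The Jacobian ideal of `f₀`, generated by its four partial derivatives. -/
def J : Ideal S :=
  Ideal.span {pderiv 0 f₀, pderiv 1 f₀, pderiv 2 f₀, pderiv 3 f₀}

/-- The Jacobian ring `R = S ⧸ J`. -/
abbrev R : Type := S ⧸ J

/-- The quotient map `mk : S → R` as a `ℂ`-linear map. -/
def mkL : S →ₗ[ℂ] R := (Ideal.Quotient.mkₐ ℂ J).toLinearMap

/-- `S_k`, the space of weighted homogeneous polynomials of weighted degree `k`. -/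
def Sk (k : ℕ) : Submodule ℂ S := weightedHomogeneousSubmodule ℂ w k

/-- `R_k = mk(S_k)`, the image of `S_k` in the Jacobian ring. -/
def Rk (k : ℕ) : Submodule ℂ R := (Sk k).map mkL

/-! A monomial ideal generated by pure powers `xᵢ^{aᵢ}` contains exactly the polynomials all of whose
monomials are divisible by some `xᵢ^{aᵢ}`; the Jacobian ideal of `f₀` is of this kind, with
`a = (9, 9, 4, 1)`. If `x₁·p` and `x₂·p` lie in `J` but a monomial `m` of `p` does not, then
`m₁ ≥ 8` and `m₂ ≥ 8`, so `m` has weighted degree at least `16 > 10`. -/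

namespace MvPolynomial

section

variable {σ A : Type*} [CommSemiring A] (a : σ → ℕ)

theorem mem_span_range_X_pow_iff (p : MvPolynomial σ A) :
    p ∈ Ideal.span (Set.range fun i => (X i ^ a i : MvPolynomial σ A)) ↔
      ∀ m ∈ p.support, ∃ i, a i ≤ m i := by
  have : (Set.range fun i => (X i ^ a i : MvPolynomial σ A)) =
      (fun s => monomial s (1 : A)) '' Set.range fun i => Finsupp.single i (a i) := by
    simp only [← Set.range_comp, Function.comp_def, X_pow_eq_monomial]
  simp only [this, mem_ideal_span_monomial_image, Set.exists_range_iff, Finsupp.single_le_iff]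

theorem exists_le_or_le_succ_of_X_mul_mem_span_X_pow {p : MvPolynomial σ A} {i : σ}
    (h : X i * p ∈ Ideal.span (Set.range fun i => (X i ^ a i : MvPolynomial σ A)))
    {m : σ →₀ ℕ} (hm : m ∈ p.support) : (∃ j, a j ≤ m j) ∨ a i ≤ m i + 1 := by
  rw [mem_span_range_X_pow_iff] at h
  obtain ⟨j, hj⟩ := h (Finsupp.single i 1 + m)
    (by rwa [mem_support_iff, coeff_X_mul, ← mem_support_iff])
  by_cases hij : i = j
  · subst hij
    exact .inr (by simpa [add_comm] using hj)
  · exact .inl ⟨j, by simpa [Finsupp.single_apply, hij] using hj⟩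

theorem pderiv_sum_X_pow_succ [Fintype σ] (i : σ) :
    pderiv i (∑ j, X j ^ (a j + 1) : MvPolynomial σ A) = C (a i + 1 : A) * X i ^ a i := by
  classical
  simp [pderiv_X, Pi.single_apply]

end

theorem span_range_pderiv_sum_X_pow_succ {σ K : Type*} [Field K] [CharZero K] [Fintype σ]
    (a : σ → ℕ) :
    Ideal.span (Set.range fun i => pderiv i (∑ j, X j ^ (a j + 1) : MvPolynomial σ K)) =
      Ideal.span (Set.range fun i => X i ^ a i) := by
  simp only [pderiv_sum_X_pow_succ, Ideal.span_range_eq_iSup]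
  congr! 2 with i
  exact Ideal.span_singleton_mul_left_unit ((Nat.cast_add_one_ne_zero _).isUnit.map C) _

end MvPolynomial

theorem weight_w_apply (m : Fin 4 →₀ ℕ) :
    Finsupp.weight w m = m 0 + m 1 + 2 * m 2 + 5 * m 3 := by
  simp [Finsupp.weight_apply, Finsupp.sum_fintype, Fin.sum_univ_four, w, mul_comm]

theorem f₀_eq_sum_X_pow : f₀ = ∑ j, X j ^ (![9, 9, 4, 1] j + 1) := by
  simp [f₀, Fin.sum_univ_four]

theorem J_eq_span_X_pow : J = Ideal.span (Set.range fun i => X i ^ ![9, 9, 4, 1] i) := by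
  rw [← span_range_pderiv_sum_X_pow_succ, ← f₀_eq_sum_X_pow, J]
  congr 1
  ext
  simp [Fin.exists_fin_succ, eq_comm]

/-- Injectivity of the multiplication map in degree 10: if `p` is weighted homogeneous of
weighted degree 10 and `x₁·p ∈ J` and `x₂·p ∈ J`, then `p ∈ J`. -/
theorem multiplication_injective :
    ∀ p : S, IsWeightedHomogeneous w p 10 →
      X 0 * p ∈ J → X 1 * p ∈ J → p ∈ J := by
  intro p hp h₀ h₁
  rw [J_eq_span_X_pow] at h₀ h₁ ⊢
  refine (mem_span_range_X_pow_iff _ p).mpr fun m hm => ?_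
  have hdeg : m 0 + m 1 + 2 * m 2 + 5 * m 3 = 10 :=
    weight_w_apply m ▸ hp (mem_support_iff.mp hm)
  rcases exists_le_or_le_succ_of_X_mul_mem_span_X_pow _ h₀ hm with hm_mem | hm₀
  · exact hm_mem
  rcases exists_le_or_le_succ_of_X_mul_mem_span_X_pow _ h₁ hm with hm_mem | hm₁
  · exact hm_mem
  simp only [Fin.isValue, Matrix.cons_val_zero, Matrix.cons_val_one] at hm₀ hm₁
  omega
end
end

section
/- The differential of the period map of degree-10 hypersurfaces in P(1,1,2,5) at the Fermat point has the maximum rank 28: the ℂ-linear map Φ : S₁₀ → (S₁ →ₗ R₁₁) defined by Φ(p)(ℓ) = mk(p·ℓ) has kernel exactly J ∩ S₁₀, and its range has finrank 28. -/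
/-!
The Jacobian ideal `J` is the monomial ideal `(x₁⁹, x₂⁹, x₃⁴, x₄)`, so `S₁₀` and `J ∩ S₁₀` are
spanned by the monomials they contain: 49 and 21 of them. A monomial `m` of weight 10 outside `J`
cannot have both `x₁m` and `x₂m` in `J`, since that would force the exponents of `x₁` and `x₂` to
be 8; hence the kernel of `Φ` is `J ∩ S₁₀`, and rank–nullity gives rank `49 - 21 = 28`.
-/

open MvPolynomial

noncomputable section

/-- The differential of the period map at the Fermat point:
`Φ : S₁₀ → (S₁ →ₗ R)`, `Φ(p)(ℓ) = mk(p·ℓ)`. -/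
def Φ : (Sk 10) →ₗ[ℂ] (Sk 1) →ₗ[ℂ] R :=
  (LinearMap.mul ℂ R).compl₁₂ (mkL ∘ₗ (Sk 10).subtype) (mkL ∘ₗ (Sk 1).subtype)

namespace MvPolynomial

variable {σ K : Type*}

theorem finrank_restrictSupport [Field K] (s : Finset (σ →₀ ℕ)) :
    Module.finrank K (restrictSupport K (s : Set (σ →₀ ℕ))) = s.card := by
  rw [Module.finrank_eq_nat_card_basis (basisRestrictSupport K _), Nat.card_coe_set_eq,
    Set.ncard_coe_finset]

end MvPolynomial

namespace Finsupp

variable {σ : Type*} [Fintype σ] [DecidableEq σ]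

def weightFinset (w : σ → ℕ) (n : ℕ) : Finset (σ →₀ ℕ) :=
  ((Fintype.piFinset fun i => Finset.range (n / w i + 1)).filter
    fun f => ∑ i, f i • w i = n).map equivFunOnFinite.symm.toEmbedding

theorem coe_weightFinset {w : σ → ℕ} (hw : ∀ i, w i ≠ 0) (n : ℕ) :
    (weightFinset w n : Set (σ →₀ ℕ)) = {d | weight w d = n} := by
  ext d
  simp only [weightFinset, Finset.coe_map, Equiv.coe_toEmbedding, Set.mem_image_equiv,
    Equiv.symm_symm, Finset.coe_filter, Fintype.mem_piFinset, Finset.mem_range,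
    Set.mem_ofPred_eq, equivFunOnFinite_apply, weight_eq_sum]
  refine ⟨And.right, fun h => ⟨fun i => ?_, h⟩⟩
  rw [Nat.lt_succ_iff, Nat.le_div_iff_mul_le (Nat.pos_of_ne_zero (hw i)), ← h]
  exact Finset.single_le_sum (fun j _ => Nat.zero_le (d j • w j)) (Finset.mem_univ i)

end Finsupp

open Finsupp

theorem w_ne_zero (i : Fin 4) : w i ≠ 0 := by
  fin_cases i <;> decide

theorem weight_w (m : Fin 4 →₀ ℕ) : weight w m = m 0 + m 1 + 2 * m 2 + 5 * m 3 := by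
  simp [weight_eq_sum, Fin.sum_univ_four, w, mul_comm]

theorem Sk_eq_restrictSupport (n : ℕ) :
    Sk n = restrictSupport ℂ (weightFinset w n : Set (Fin 4 →₀ ℕ)) := by
  rw [coe_weightFinset w_ne_zero]
  exact weightedHomogeneousSubmodule_eq_finsupp_supported ℂ w n

theorem J_eq_span : J = Ideal.span {X 0 ^ 9, X 1 ^ 9, X 2 ^ 4, X 3} := by
  have span_C_mul (c : ℂ) (hc : c ≠ 0) (x : S) : Ideal.span {C c * x} = Ideal.span {x} :=
    Ideal.span_singleton_mul_left_unit ((IsUnit.mk0 c hc).map C) x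
  have h0 : pderiv 0 f₀ = C 10 * X 0 ^ 9 := by simp [f₀, ← map_ofNat C]
  have h1 : pderiv 1 f₀ = C 10 * X 1 ^ 9 := by simp [f₀, ← map_ofNat C]
  have h2 : pderiv 2 f₀ = C 5 * X 2 ^ 4 := by simp [f₀, ← map_ofNat C]
  have h3 : pderiv 3 f₀ = C 2 * X 3 := by simp [f₀, ← map_ofNat C]
  simp only [J, Ideal.span_insert, h0, h1, h2, h3, span_C_mul _ (by norm_num : (10 : ℂ) ≠ 0),
    span_C_mul _ (by norm_num : (5 : ℂ) ≠ 0), span_C_mul _ (by norm_num : (2 : ℂ) ≠ 0)]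

def jacobianExponents : Set (Fin 4 →₀ ℕ) := {m | 9 ≤ m 0 ∨ 9 ≤ m 1 ∨ 4 ≤ m 2 ∨ 1 ≤ m 3}

theorem mem_J_iff (p : S) : p ∈ J ↔ ↑p.support ⊆ jacobianExponents := by
  have hgen : ({X 0 ^ 9, X 1 ^ 9, X 2 ^ 4, X 3} : Set S) = (monomial · 1) ''
      {single 0 9, single 1 9, single 2 4, single 3 1} := by
    simp [Set.image_insert_eq, ← X_pow_eq_monomial]
  rw [J_eq_span, hgen, mem_ideal_span_monomial_image]
  simp [Set.subset_def, jacobianExponents, single_le_iff]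

theorem mem_jacobianExponents_of_add_single {m : Fin 4 →₀ ℕ} (hm : weight w m = 10)
    (h0 : m + single 0 1 ∈ jacobianExponents) (h1 : m + single 1 1 ∈ jacobianExponents) :
    m ∈ jacobianExponents := by
  rw [weight_w] at hm
  simp only [jacobianExponents, Set.mem_ofPred_eq, Finsupp.add_apply, single_apply,
    Fin.reduceEq, ↓reduceIte] at h0 h1 ⊢
  omega

theorem mem_J_of_mul_X_mem {p : S} (hp : p ∈ Sk 10) (h0 : p * X 0 ∈ J) (h1 : p * X 1 ∈ J) :
    p ∈ J := by
  rw [mem_J_iff] at h0 h1 ⊢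
  rw [support_mul_X, Finset.coe_map, Set.image_subset_iff] at h0 h1
  exact fun m hm =>
    mem_jacobianExponents_of_add_single (hp (MvPolynomial.mem_support_iff.mp hm)) (h0 hm) (h1 hm)

theorem Φ_apply (p : Sk 10) (ℓ : Sk 1) : Φ p ℓ = Ideal.Quotient.mk J ((p : S) * (ℓ : S)) := by
  simp [Φ, mkL]

theorem Φ_eq_zero_iff (p : Sk 10) : Φ p = 0 ↔ (p : S) ∈ J := by
  refine ⟨fun h => ?_, fun h => LinearMap.ext fun ℓ => ?_⟩
  · have hX (i : Fin 4) (hi : w i = 1) : (p : S) * X i ∈ J := by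
      have hXi : X i ∈ Sk 1 := hi ▸ isWeightedHomogeneous_X ℂ w i
      rw [← Ideal.Quotient.eq_zero_iff_mem, ← Φ_apply p ⟨X i, hXi⟩, h, LinearMap.zero_apply]
    exact mem_J_of_mul_X_mem p.2 (hX 0 rfl) (hX 1 rfl)
  · rw [Φ_apply, LinearMap.zero_apply, Ideal.Quotient.eq_zero_iff_mem]
    exact J.mul_mem_right _ h

theorem map_ker_Φ : (LinearMap.ker Φ).map (Sk 10).subtype =
    restrictSupport ℂ ((weightFinset w 10 : Set (Fin 4 →₀ ℕ)) ∩ jacobianExponents) := by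
  ext p
  rw [mem_restrictSupport_iff, Set.subset_inter_iff, ← mem_restrictSupport_iff,
    ← Sk_eq_restrictSupport, ← mem_J_iff]
  constructor
  · rintro ⟨q, hq, rfl⟩
    exact ⟨q.2, (Φ_eq_zero_iff q).1 hq⟩
  · rintro ⟨hS, hJ⟩
    exact ⟨⟨p, hS⟩, (Φ_eq_zero_iff _).2 hJ, rfl⟩

theorem finrank_Sk_ten : Module.finrank ℂ (Sk 10) = 49 := by
  rw [Sk_eq_restrictSupport, finrank_restrictSupport]
  decide +kernel

theorem finrank_ker_Φ : Module.finrank ℂ (LinearMap.ker Φ) = 21 := by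
  have hfilter : (weightFinset w 10 : Set (Fin 4 →₀ ℕ)) ∩ jacobianExponents =
      ↑((weightFinset w 10).filter fun m => 9 ≤ m 0 ∨ 9 ≤ m 1 ∨ 4 ≤ m 2 ∨ 1 ≤ m 3) := by
    ext; simp [jacobianExponents]
  rw [← Submodule.finrank_map_subtype_eq, map_ker_Φ, hfilter, finrank_restrictSupport]
  decide +kernel

/-- The differential of the period map of degree-10 hypersurfaces in `P(1,1,2,5)` at the
Fermat point has the maximum rank 28: `Φ(p)(ℓ) = mk(p·ℓ)`, the kernel of `Φ` is exactly
`J ∩ S₁₀`, and its range has dimension 28. -/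
theorem differential_max_rank :
    (∀ (p : Sk 10) (ℓ : Sk 1),
        Φ p ℓ = Ideal.Quotient.mk J ((p : S) * (ℓ : S))) ∧
      (∀ p : Sk 10, Φ p = 0 ↔ (p : S) ∈ J) ∧
      Module.finrank ℂ (LinearMap.range Φ) = 28 := by
  refine ⟨Φ_apply, Φ_eq_zero_iff, ?_⟩
  have : FiniteDimensional ℂ (Sk 10) := Module.finite_of_finrank_eq_succ finrank_Sk_ten
  have hrank := LinearMap.finrank_range_add_finrank_ker Φ
  rw [finrank_Sk_ten, finrank_ker_Φ] at hrank
  omega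
end
end
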